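/- arXiv:math/9803103 — 2 statements merged into one kernel-verified Lean document; each statement's English description precedes it below -/
import Mathlib

section
/- Let U be the subgroup of the symmetric group S_6 generated by the double transpositions (1 2)(3 4) and (3 4)(5 6) (a Klein four-group). Then Sha²_ω(U, M_6) ≠ 0, where the ℤ[S_6]-module M_6 is viewed as a ℤ[U]-module by restriction. -/
/-! Preliminaries: a lightweight theory of `G`-modules (abelian groups with a
distributive `G`-action, i.e. `ℤ[G]`-modules), lattices, permutation modules,
flasque modules and flasque resolutions, the norm-one-torus character lattice
`Mn n` over the symmetric group `S_n`, and low-degree group cohomology with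
the invariant `Ш²_ω`. -/

open Equiv

universe u

/-- A `G`-module: an additive commutative group with a distributive `G`-action
(equivalently, a `ℤ[G]`-module). -/
structure GMod (G : Type u) [Group G] : Type (u + 1) where
  carrier : Type u
  [isAddCommGroup : AddCommGroup carrier]
  [isDistribMulAction : DistribMulAction G carrier]

attribute [instance] GMod.isAddCommGroup GMod.isDistribMulAction

namespace GMod

variable {G : Type u} [Group G]

instance : CoeSort (GMod G) (Type u) := ⟨GMod.carrier⟩

/-- A morphism of `G`-modules is an additive map commuting with the `G`-action. -/
def IsEquivariant {M N : GMod G} (f : M →+ N) : Prop :=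
  ∀ (g : G) (m : M), f (g • m) = g • f m

/-- Two `G`-modules are isomorphic if there is an equivariant additive equivalence. -/
def Iso (M N : GMod G) : Prop :=
  ∃ e : M ≃+ N, ∀ (g : G) (m : M), e (g • m) = g • e m

/-- Restriction of a `G`-module along a group homomorphism `φ : H →* G`. -/
def res (M : GMod G) {H : Type u} [Group H] (φ : H →* G) : GMod H where
  carrier := M
  isDistribMulAction :=
    { smul := fun h m => φ h • m
      one_smul := fun m => by show φ 1 • m = m; simp
      mul_smul := fun a b m => by
        show φ (a * b) • m = φ a • (φ b • m)
        rw [map_mul, mul_smul]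
      smul_zero := fun a => by show φ a • (0 : M.carrier) = 0; simp
      smul_add := fun a x y => by
        show φ a • (x + y) = φ a • x + φ a • y
        simp [smul_add] }

/-- The direct sum of two `G`-modules. -/
def prod (M N : GMod G) : GMod G where
  carrier := M × N

/-- The direct sum of `k` copies of a `G`-module. -/
def copies (k : ℕ) (M : GMod G) : GMod G where
  carrier := Fin k → M

/-- A trivial `G`-module. -/
def triv (G : Type u) [Group G] (A : Type u) [AddCommGroup A] : GMod G where
  carrier := A
  isDistribMulAction :=
    { smul := fun _ a => a
      one_smul := fun _ => rfl
      mul_smul := fun _ _ _ => rfl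
      smul_zero := fun _ => rfl
      smul_add := fun _ _ _ => rfl }

/-- The permutation `G`-module `ℤ[X]` attached to an action `φ : G →* Perm X`,
realized as functions `X → ℤ` with `(g • f) x = f ((φ g)⁻¹ x)`. -/
def permMod {X : Type u} (φ : G →* Equiv.Perm X) : GMod G where
  carrier := X → ℤ
  isDistribMulAction :=
    { smul := fun g f => fun x => f ((φ g)⁻¹ x)
      one_smul := fun f => by funext x; show f ((φ 1)⁻¹ x) = f x; simp
      mul_smul := fun g h f => by
        funext x
        show f ((φ (g * h))⁻¹ x) = f ((φ h)⁻¹ ((φ g)⁻¹ x))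
        rw [map_mul, mul_inv_rev, Equiv.Perm.mul_apply]
      smul_zero := fun g => rfl
      smul_add := fun g a b => rfl }

/-- The subgroup of `X → ℤ` generated by the all-ones vector (for `X = G` this
is `ℤ · N_G`, the span of the norm element of the group algebra). -/
def normSub (X : Type u) : AddSubgroup (X → ℤ) :=
  AddSubgroup.zmultiples (fun _ => (1 : ℤ))

/-- The additive endomorphism of `X → ℤ` induced by a permutation of `X`. -/
def permHomAdd {X : Type u} (σ : Equiv.Perm X) : (X → ℤ) →+ (X → ℤ) where
  toFun f := fun x => f (σ⁻¹ x)
  map_zero' := rfl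
  map_add' _ _ := rfl

theorem normSub_le_comap {X : Type u} (σ : Equiv.Perm X) :
    normSub X ≤ (normSub X).comap (permHomAdd σ) := by
  intro f hf
  rcases AddSubgroup.mem_zmultiples_iff.mp hf with ⟨k, rfl⟩
  exact AddSubgroup.mem_zmultiples_iff.mpr ⟨k, by funext x; simp [permHomAdd]⟩

/-- The quotient of the permutation module `ℤ[X]` by the span of the all-ones
vector, as a `G`-module.  For `X = Fin n` with the tautological action of
`S_n` this is the lattice `M_n`; for `X = G` with the regular action this is
`ℤ[G]/ℤ·N_G`. -/
def permModQuot {X : Type u} (φ : G →* Equiv.Perm X) : GMod G where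
  carrier := (X → ℤ) ⧸ normSub X
  isDistribMulAction :=
    { smul := fun g q =>
        QuotientAddGroup.map _ _ (permHomAdd (φ g)) (normSub_le_comap (φ g)) q
      one_smul := fun q => QuotientAddGroup.induction_on q (fun f => by
        show QuotientAddGroup.map _ _ (permHomAdd (φ 1)) _ (QuotientAddGroup.mk f)
            = QuotientAddGroup.mk f
        rw [QuotientAddGroup.map_mk]
        congr 1
        funext x
        simp [permHomAdd])
      mul_smul := fun g h q => QuotientAddGroup.induction_on q (fun f => by
        show QuotientAddGroup.map _ _ (permHomAdd (φ (g * h))) _ (QuotientAddGroup.mk f)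
            = QuotientAddGroup.map _ _ (permHomAdd (φ g)) _
              (QuotientAddGroup.map _ _ (permHomAdd (φ h)) _ (QuotientAddGroup.mk f))
        rw [QuotientAddGroup.map_mk, QuotientAddGroup.map_mk, QuotientAddGroup.map_mk]
        congr 1
        funext x
        simp [permHomAdd, map_mul, mul_inv_rev, Equiv.Perm.mul_apply])
      smul_zero := fun g => map_zero _
      smul_add := fun g a b => map_add _ a b }

/-- The character lattice `M_n = ℤ[S_n/S_{n-1}] / ℤ·(1,…,1)` of the norm-one
torus of a degree-`n` generic extension: the quotient of `Fin n → ℤ` (with the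
coordinate-permuting action of `S_n`) by the span of the all-ones vector. -/
def Mn (n : ℕ) : GMod (Equiv.Perm (Fin n)) :=
  permModQuot (MonoidHom.id (Equiv.Perm (Fin n)))

/-- The natural permutation module `Fin n → ℤ` of `S_n`. -/
def stdMod (n : ℕ) : GMod (Equiv.Perm (Fin n)) :=
  permMod (MonoidHom.id (Equiv.Perm (Fin n)))

/-- The regular `G`-module `ℤ[G]`, realized as functions `G → ℤ`. -/
def regular (G : Type u) [Group G] : GMod G :=
  permMod (MulAction.toPermHom G G)

/-- The quotient `ℤ[G]/ℤ·N_G` of the regular module by the span of the norm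
element `N_G = Σ_{g ∈ G} g`. -/
def regModNorm (G : Type u) [Group G] : GMod G :=
  permModQuot (MulAction.toPermHom G G)

/-- A `G`-lattice: a `G`-module that is finitely generated and free over `ℤ`. -/
def IsLattice (M : GMod G) : Prop :=
  Module.Free ℤ M ∧ Module.Finite ℤ M

/-- A permutation `G`-lattice: one admitting a finite `ℤ`-basis permuted by `G`. -/
def IsPermutation (M : GMod G) : Prop :=
  ∃ (ι : Type u) (_ : Finite ι) (b : Module.Basis ι ℤ M) (f : G →* Equiv.Perm ι),
    ∀ (g : G) (i : ι), g • b i = b (f g i)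

/-- A stably permutation `G`-module: `N ⊕ P ≅ Q` for permutation modules `P, Q`. -/
def IsStablyPermutation (N : GMod G) : Prop :=
  ∃ P Q : GMod G, P.IsPermutation ∧ Q.IsPermutation ∧ Iso (N.prod P) Q

/-- A flasque `G`-module: `Ĥ⁻¹(G', N) = 0` for every subgroup `G' ≤ G`, i.e.
every `x` killed by the norm of `G'` is a sum of elements `g • y - y`. -/
def IsFlasque [Finite G] (N : GMod G) : Prop :=
  ∀ (H : Subgroup G) (x : N),
    (∑ g ∈ (Set.toFinite (H : Set G)).toFinset, g • x) = 0 →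
      x ∈ AddSubgroup.closure {z : N.carrier | ∃ g ∈ H, ∃ y : N.carrier, z = g • y - y}

/-- A flasque resolution `0 → M → S → N → 0`: a short exact sequence of
`G`-lattices with `S` a permutation module and `N` flasque. -/
def IsFlasqueResolution [Finite G] (M S N : GMod G) : Prop :=
  M.IsLattice ∧ S.IsLattice ∧ N.IsLattice ∧ S.IsPermutation ∧ N.IsFlasque ∧
    ∃ (i : M →+ S) (p : S →+ N),
      IsEquivariant i ∧ IsEquivariant p ∧
        Function.Injective i ∧ Function.Surjective p ∧ i.range = p.ker

/-! ### Low-degree group cohomology via inhomogeneous cocycles. -/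

/-- Inhomogeneous 2-cocycles of `G` with values in `M`. -/
def twoCocycles (M : GMod G) : AddSubgroup (G → G → M.carrier) where
  carrier := {f | ∀ g h k : G, g • f h k + f g (h * k) = f (g * h) k + f g h}
  zero_mem' := by intro g h k; simp
  add_mem' := by
    intro a b ha hb g h k
    simp only [Pi.add_apply, smul_add]
    rw [add_add_add_comm, ha g h k, hb g h k, add_add_add_comm]
  neg_mem' := by
    intro a ha g h k
    simp only [Pi.neg_apply, smul_neg, ← neg_add, ha g h k]

/-- The differential sending a 1-cochain to a 2-coboundary. -/
def dOne (M : GMod G) : (G → M.carrier) →+ (G → G → M.carrier) where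
  toFun c := fun g h => g • c h - c (g * h) + c g
  map_zero' := by funext g h; simp
  map_add' a b := by
    funext g h
    simp only [Pi.add_apply, smul_add]
    abel

/-- `H²(G, M)`: 2-cocycles modulo 2-coboundaries. -/
def H2 (M : GMod G) : Type u :=
  twoCocycles M ⧸ ((dOne M).range.addSubgroupOf (twoCocycles M))

instance (M : GMod G) : AddCommGroup (H2 M) :=
  inferInstanceAs (AddCommGroup (_ ⧸ _))

/-- 1-cocycles (crossed homomorphisms) of `G` with values in `M`. -/
def oneCocycles (M : GMod G) : AddSubgroup (G → M.carrier) where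
  carrier := {f | ∀ g h : G, f (g * h) = g • f h + f g}
  zero_mem' := by intro g h; simp
  add_mem' := by
    intro a b ha hb g h
    simp only [Pi.add_apply, smul_add, ha g h, hb g h]
    abel
  neg_mem' := by
    intro a ha g h
    simp only [Pi.neg_apply, smul_neg, ha g h]
    abel

/-- The differential sending a 0-cochain to a 1-coboundary. -/
def dZero (M : GMod G) : M.carrier →+ (G → M.carrier) where
  toFun m := fun g => g • m - m
  map_zero' := by funext g; simp
  map_add' a b := by
    funext g
    simp only [Pi.add_apply, smul_add]
    abel

/-- `H¹(G, M)`: 1-cocycles modulo 1-coboundaries. -/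
def H1 (M : GMod G) : Type u :=
  oneCocycles M ⧸ ((dZero M).range.addSubgroupOf (oneCocycles M))

instance (M : GMod G) : AddCommGroup (H1 M) :=
  inferInstanceAs (AddCommGroup (_ ⧸ _))

/-- Restriction of 2-cocycles along a group homomorphism `φ : H →* G`. -/
def resTwoCocycles (M : GMod G) {H : Type u} [Group H] (φ : H →* G) :
    twoCocycles M →+ twoCocycles (M.res φ) where
  toFun f := ⟨fun a b => f.1 (φ a) (φ b), by
    intro a b c
    show φ a • f.1 (φ b) (φ c) + f.1 (φ a) (φ (b * c))
        = f.1 (φ (a * b)) (φ c) + f.1 (φ a) (φ b)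
    rw [map_mul, map_mul]
    exact f.2 (φ a) (φ b) (φ c)⟩
  map_zero' := rfl
  map_add' _ _ := rfl

theorem coboundaries_le_comap_resTwoCocycles (M : GMod G) {H : Type u} [Group H]
    (φ : H →* G) :
    ((dOne M).range.addSubgroupOf (twoCocycles M)) ≤
      (((dOne (M.res φ)).range.addSubgroupOf (twoCocycles (M.res φ))).comap
        (resTwoCocycles M φ)) := by
  intro f hf
  rcases hf with ⟨c, hc⟩
  refine ⟨fun h => c (φ h), ?_⟩
  have hc' : ∀ g h : G, g • c h - c (g * h) + c g = f.1 g h := fun g h =>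
    congrFun (congrFun hc g) h
  funext a b
  show φ a • c (φ b) - c (φ (a * b)) + c (φ a) = f.1 (φ a) (φ b)
  rw [map_mul]
  exact hc' (φ a) (φ b)

/-- The restriction map `H²(G, M) → H²(H, M)` along `φ : H →* G`. -/
def resH2 (M : GMod G) {H : Type u} [Group H] (φ : H →* G) :
    H2 M →+ H2 (M.res φ) :=
  QuotientAddGroup.map _ _ (resTwoCocycles M φ)
    (coboundaries_le_comap_resTwoCocycles M φ)

/-- `Ш²_ω(G, M)`: the subgroup of `H²(G, M)` of classes whose restriction to
every cyclic subgroup `⟨g⟩ ≤ G` vanishes. -/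
def Sha2omega (M : GMod G) : AddSubgroup (H2 M) :=
  ⨅ g : G, (resH2 M ((Subgroup.zpowers g).subtype)).ker

end GMod

open GMod

/-- The Klein four-group `U = ⟨(1 2)(3 4), (3 4)(5 6)⟩ ⊆ S_6`
(in 0-based indexing: `⟨(0 1)(2 3), (2 3)(4 5)⟩`). -/
def kleinU : Subgroup (Equiv.Perm (Fin 6)) :=
  Subgroup.closure
    {Equiv.swap (0 : Fin 6) 1 * Equiv.swap 2 3, Equiv.swap (2 : Fin 6) 3 * Equiv.swap 4 5}

/-! Write `a = (0 1)(2 3)`, `b = (2 3)(4 5)` and let `K = ⟨b⟩` be the stabiliser of `0` in `U`,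
a subgroup of index two. The class `x` of `e₄ + e₅` in `M₆` is `U`-invariant, so
`f(g, h) = x` for `g, h ∉ K` (and `0` otherwise) is a 2-cocycle: the inflation from
`U/K ≅ C₂` of the class of `x` in `Ĥ⁰(C₂, M₆ᴷ) ≅ H²(C₂, M₆ᴷ)`. Its restriction to `⟨g⟩` is
trivial when `g ∈ K`, and when `g ∉ K` because `x = g • y + y` is a norm from `⟨g⟩`
(`y = -(e₀ + e₂)` for `a`, `y = e₄` for `ab`). Yet `f = dc` would force
`p = c(a)`, `q = c(b)` to satisfy `a • p + p = x`, `b • q + q = 0`, `a • q + p = b • p + q`,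
which a parity count on coordinates rules out. -/

theorem mem_zpowers_of_mul_self_eq_one {G : Type*} [Group G] {g u : G} (hg : g * g = 1)
    (hu : u ∈ Subgroup.zpowers g) : u = 1 ∨ u = g := by
  obtain ⟨m, rfl⟩ := Subgroup.mem_zpowers_iff.1 hu
  rw [zpow_eq_zpow_emod' m (n := 2) (by rw [sq, hg])]
  rcases Int.emod_two_eq_zero_or_one m with h | h <;> simp [h]

namespace GMod

variable {G : Type u} [Group G] {M : GMod G}

def H2.mk (f : twoCocycles M) : H2 M := QuotientAddGroup.mk f

theorem H2.mk_eq_zero_iff (f : twoCocycles M) : H2.mk f = 0 ↔ ∃ c, dOne M c = f :=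
  (QuotientAddGroup.eq_zero_iff f).trans AddSubgroup.mem_addSubgroupOf

theorem mem_Sha2omega_iff (c : H2 M) :
    c ∈ Sha2omega M ↔ ∀ g : G, resH2 M (Subgroup.zpowers g).subtype c = 0 := by
  simp only [Sha2omega, AddSubgroup.mem_iInf, AddMonoidHom.mem_ker]

theorem mk_eq_mk_iff_normSub {X : Type u} {v w : X → ℤ} :
    (QuotientAddGroup.mk v : (X → ℤ) ⧸ normSub X) = QuotientAddGroup.mk w ↔
      ∃ k : ℤ, ∀ i, w i - v i = k := by
  rw [QuotientAddGroup.eq, normSub, AddSubgroup.mem_zmultiples_iff]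
  simp [funext_iff, eq_comm, neg_add_eq_sub]

variable (K : Subgroup G) (x : M)

open scoped Classical in
noncomputable def parityCocycle : G → G → M := fun g h => if g ∉ K ∧ h ∉ K then x else 0

variable {K x}

theorem parityCocycle_mem_twoCocycles (hK : K.index = 2) (hx : ∀ g : G, g • x = x) :
    parityCocycle K x ∈ twoCocycles M := by
  intro g h k
  have hmul (a b : G) := Subgroup.mul_mem_iff_of_index_two hK (a := a) (b := b)
  simp only [parityCocycle, smul_ite, smul_zero, hx]
  by_cases g ∈ K <;> by_cases h ∈ K <;> by_cases k ∈ K <;> simp [*]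

theorem resH2_parityCocycle_eq_zero (hK : K.index = 2) (hx : ∀ g : G, g • x = x)
    (H : Subgroup G) (y : M) (hin : ∀ h ∈ H, h ∈ K → h • y = y)
    (hout : ∀ h ∈ H, h ∉ K → h • y + y = x) :
    resH2 M H.subtype (H2.mk ⟨_, parityCocycle_mem_twoCocycles hK hx⟩) = 0 := by
  classical
  refine (H2.mk_eq_zero_iff (resTwoCocycles M H.subtype _)).2
    ⟨fun h => if (h : G) ∈ K then 0 else y, ?_⟩
  funext u v
  show (u : G) • (if (v : G) ∈ K then 0 else y) - (if (u : G) * v ∈ K then 0 else y)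
      + (if (u : G) ∈ K then 0 else y) = parityCocycle K x u v
  simp only [parityCocycle, Subgroup.mul_mem_iff_of_index_two hK]
  by_cases hu : (u : G) ∈ K <;> by_cases hv : (v : G) ∈ K
  · simp [hu, hv]
  · simp [hu, hv, hin _ u.2 hu]
  · simp [hu, hv]
  · simp [hu, hv, hout _ u.2 hu]

theorem parityCocycle_mem_Sha2omega (hK : K.index = 2) (hx : ∀ g : G, g • x = x)
    (hinv : ∀ g ∉ K, g * g = 1) (hnorm : ∀ g ∉ K, ∃ y : M, g • y + y = x) :
    H2.mk ⟨_, parityCocycle_mem_twoCocycles hK hx⟩ ∈ Sha2omega M := by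
  refine (mem_Sha2omega_iff _).2 fun g => ?_
  by_cases hg : g ∈ K
  · refine resH2_parityCocycle_eq_zero hK hx _ 0 (fun _ _ _ => smul_zero _) fun h hh hhK => ?_
    exact absurd (Subgroup.zpowers_le.2 hg hh) hhK
  · obtain ⟨y, hy⟩ := hnorm g hg
    refine resH2_parityCocycle_eq_zero hK hx _ y (fun h hh hhK => ?_) fun h hh hhK => ?_
    all_goals rcases mem_zpowers_of_mul_self_eq_one (hinv g hg) hh with rfl | rfl
    · exact one_smul _ _
    · exact absurd hhK hg
    · exact absurd K.one_mem hhK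
    · exact hy

theorem norm_relations_of_dOne_eq_parityCocycle {a b : G} (ha : a ∉ K) (hb : b ∈ K)
    (ha2 : a * a = 1) (hb2 : b * b = 1) (hab : a * b = b * a) {c : G → M}
    (hc : dOne M c = parityCocycle K x) :
    a • c a + c a = x ∧ b • c b + c b = 0 ∧ a • c b + c a = b • c a + c b := by
  have hc' (g h : G) : g • c h - c (g * h) + c g = parityCocycle K x g h :=
    congrFun (congrFun hc g) h
  have h1 : c 1 = 0 := by simpa [parityCocycle] using hc' 1 1
  have haa := hc' a a
  have hbb := hc' b b
  have hab' := hc' a b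
  have hba := hc' b a
  simp only [parityCocycle, ha, hb, ha2, hb2, hab, h1, not_true, not_false_eq_true, and_false,
    and_true, ite_true, ite_false, sub_zero] at haa hbb hab' hba
  refine ⟨haa, hbb, ?_⟩
  rw [← hba] at hab'
  simpa [sub_add_eq_add_sub] using hab'

end GMod

def kleinA : kleinU := ⟨swap 0 1 * swap 2 3, Subgroup.subset_closure (Or.inl rfl)⟩

def kleinB : kleinU := ⟨swap 2 3 * swap 4 5, Subgroup.subset_closure (Or.inr rfl)⟩

theorem kleinU_cases (g : kleinU) : g = 1 ∨ g = kleinA ∨ g = kleinB ∨ g = kleinA * kleinB := by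
  let S : Finset (Perm (Fin 6)) := {1, swap 0 1 * swap 2 3, swap 2 3 * swap 4 5,
    swap 0 1 * swap 2 3 * (swap 2 3 * swap 4 5)}
  obtain ⟨σ, hσ⟩ := g
  have hS : σ ∈ S := by
    induction hσ using Subgroup.closure_induction with
    | mem σ hσ => rcases hσ with rfl | rfl <;> decide
    | one => decide
    | mul σ τ _ _ hσ hτ =>
      simp only [S, Finset.mem_insert, Finset.mem_singleton] at hσ hτ
      rcases hσ with rfl | rfl | rfl | rfl <;> rcases hτ with rfl | rfl | rfl | rfl <;> decide
    | inv σ _ hσ =>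
      simp only [S, Finset.mem_insert, Finset.mem_singleton] at hσ
      rcases hσ with rfl | rfl | rfl | rfl <;> decide
  simp only [S, Finset.mem_insert, Finset.mem_singleton] at hS
  rcases hS with h | h | h | h
  · exact Or.inl (Subtype.ext h)
  · exact Or.inr (Or.inl (Subtype.ext h))
  · exact Or.inr (Or.inr (Or.inl (Subtype.ext h)))
  · exact Or.inr (Or.inr (Or.inr (Subtype.ext h)))

theorem kleinU_mul_self (g : kleinU) : g * g = 1 := by
  rcases kleinU_cases g with rfl | rfl | rfl | rfl <;> exact Subtype.ext (by decide)

def kleinK : Subgroup kleinU := MulAction.stabilizer kleinU (0 : Fin 6)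

theorem mem_kleinK_iff {g : kleinU} : g ∈ kleinK ↔ (g : Perm (Fin 6)) 0 = 0 :=
  MulAction.mem_stabilizer_iff

theorem kleinK_index : kleinK.index = 2 := by
  refine Subgroup.index_eq_two_iff.2 ⟨kleinA, fun g => ?_⟩
  simp only [mem_kleinK_iff]
  rcases kleinU_cases g with rfl | rfl | rfl | rfl <;> decide

abbrev M6U : GMod kleinU := (Mn 6).res kleinU.subtype

def mk6 : (Fin 6 → ℤ) →+ M6U := QuotientAddGroup.mk' (normSub (Fin 6))

theorem mk6_surjective : Function.Surjective mk6 := QuotientAddGroup.mk'_surjective _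

theorem mk6_eq_mk6_iff {v w : Fin 6 → ℤ} : mk6 v = mk6 w ↔ ∃ k : ℤ, ∀ i, w i - v i = k :=
  mk_eq_mk_iff_normSub

theorem kleinA_smul_mk6 (v : Fin 6 → ℤ) : kleinA • mk6 v = mk6 ![v 1, v 0, v 3, v 2, v 4, v 5] :=
  congrArg mk6 (funext fun i => by fin_cases i <;> rfl)

theorem kleinB_smul_mk6 (v : Fin 6 → ℤ) : kleinB • mk6 v = mk6 ![v 0, v 1, v 3, v 2, v 5, v 4] :=
  congrArg mk6 (funext fun i => by fin_cases i <;> rfl)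

def x6 : M6U := mk6 ![0, 0, 0, 0, 1, 1]

theorem smul_x6 (g : kleinU) : g • x6 = x6 := by
  rcases kleinU_cases g with rfl | rfl | rfl | rfl <;>
    simp [x6, mul_smul, kleinA_smul_mk6, kleinB_smul_mk6]

theorem exists_norm_x6 (g : kleinU) (hg : g ∉ kleinK) : ∃ y, g • y + y = x6 := by
  rcases kleinU_cases g with rfl | rfl | rfl | rfl
  · exact absurd kleinK.one_mem hg
  · refine ⟨mk6 ![-1, 0, -1, 0, 0, 0], ?_⟩
    rw [kleinA_smul_mk6, ← map_add, x6, mk6_eq_mk6_iff]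
    exact ⟨1, by decide⟩
  · exact absurd (mem_kleinK_iff.2 (by decide)) hg
  · refine ⟨mk6 ![0, 0, 0, 0, 1, 0], ?_⟩
    rw [mul_smul, kleinB_smul_mk6, kleinA_smul_mk6, ← map_add, x6, mk6_eq_mk6_iff]
    exact ⟨0, by decide⟩

theorem not_norm_relations_x6 (p q : M6U) :
    ¬ (kleinA • p + p = x6 ∧ kleinB • q + q = 0 ∧ kleinA • q + p = kleinB • p + q) := by
  obtain ⟨v, rfl⟩ := mk6_surjective p
  obtain ⟨w, rfl⟩ := mk6_surjective q
  rintro ⟨hp, hq, hpq⟩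
  rw [kleinA_smul_mk6, ← map_add, x6, mk6_eq_mk6_iff] at hp
  rw [kleinB_smul_mk6, ← map_add, ← map_zero mk6, mk6_eq_mk6_iff] at hq
  rw [kleinA_smul_mk6, kleinB_smul_mk6, ← map_add, ← map_add, mk6_eq_mk6_iff] at hpq
  obtain ⟨k₁, h₁⟩ := hp
  obtain ⟨k₂, h₂⟩ := hq
  obtain ⟨k₃, h₃⟩ := hpq
  -- `h₁` at 4, 5 makes `v 2 + v 3` odd, `h₂` makes `w 2 + w 3` even, and `h₃` at 2, 4
  -- gives `v 3 - v 2 = w 3 - w 2`.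
  have := h₁ 2; have := h₁ 4; have := h₁ 5; have := h₂ 0; have := h₂ 2; have := h₃ 2; have := h₃ 4
  simp only [Pi.add_apply, Pi.zero_apply, Matrix.cons_val, zero_sub] at *
  omega

/-- For the Klein four-group `U = ⟨(1 2)(3 4), (3 4)(5 6)⟩ ⊆ S_6`, the
invariant `Ш²_ω(U, M_6)` is nontrivial. -/
theorem sha_klein_Mn6_nontrivial :
    Sha2omega ((Mn 6).res kleinU.subtype) ≠ ⊥ := by
  intro hbot
  have hmem := parityCocycle_mem_Sha2omega kleinK_index smul_x6
    (fun g _ => kleinU_mul_self g) exists_norm_x6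
  rw [hbot, AddSubgroup.mem_bot, H2.mk_eq_zero_iff] at hmem
  obtain ⟨c, hc⟩ := hmem
  exact not_norm_relations_x6 _ _ <| norm_relations_of_dOne_eq_parityCocycle
    (mt mem_kleinK_iff.1 (by decide)) (mem_kleinK_iff.2 (by decide))
    (kleinU_mul_self _) (kleinU_mul_self _) (Subtype.ext (by decide)) hc
end

section
/- Let G be a finite group and M a finitely generated ℤ[G]-module. If Sha²_ω(P, M|_P) = 0 for every prime p and every Sylow p-subgroup P of G, then Sha²_ω(G, M) = 0. Equivalently, the product of the restriction maps embeds Sha²_ω(G, M) into the product over primes p of Sha²_ω(Syl_p(G), M). -/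
/-! Preliminaries: a lightweight theory of `G`-modules (abelian groups with a
distributive `G`-action, i.e. `ℤ[G]`-modules), lattices, permutation modules,
flasque modules and flasque resolutions, the norm-one-torus character lattice
`Mn n` over the symmetric group `S_n`, and low-degree group cohomology with
the invariant `Ш²_ω`. -/

open Equiv

universe u

open GMod

/-! If the restriction of a 2-cocycle `f` to a subgroup `P` of finite index is the coboundary
of `c`, then summing suitable translates of `c`, corrected by values of `f`, over a set of
right coset representatives of `P` gives a 1-cochain whose coboundary is `[G : P] • f`.
A class of `Ш²_ω(G, M)` restricts into `Ш²_ω(P, M)`, hence to zero on every Sylow subgroup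
by hypothesis, so it is killed by the indices of all Sylow subgroups, which have no common
prime factor. -/

theorem eq_zero_of_forall_sylow_index_nsmul_eq_zero (G : Type*) [Group G] [Finite G]
    {A : Type*} [AddMonoid A] {x : A}
    (h : ∀ p : ℕ, p.Prime → ∀ P : Sylow p G, (P : Subgroup G).index • x = 0) : x = 0 := by
  rw [← AddMonoid.addOrderOf_eq_one_iff]
  by_contra hx
  have hp := Nat.minFac_prime hx
  have := Fact.mk hp
  obtain ⟨P⟩ : Nonempty (Sylow (addOrderOf x).minFac G) := inferInstance
  exact P.not_dvd_index ((Nat.minFac_dvd _).trans (addOrderOf_dvd_of_nsmul_eq_zero (h _ hp P)))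

namespace GMod

variable {G : Type u} [Group G]

theorem resH2_resH2 {H K : Type u} [Group H] [Group K] (M : GMod G) (φ : H →* G) (ψ : K →* H)
    (x : H2 M) : resH2 (M.res φ) ψ (resH2 M φ x) = resH2 M (φ.comp ψ) x :=
  QuotientAddGroup.induction_on x fun _ => rfl

theorem resH2_subtype_mem_sha2omega {M : GMod G} {x : H2 M} (hx : x ∈ Sha2omega M)
    (H : Subgroup G) : resH2 M H.subtype x ∈ Sha2omega (M.res H.subtype) := by
  refine AddSubgroup.mem_iInf.2 fun y => ?_
  have hcyclic : ∀ z : Subgroup.zpowers y,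
      H.subtype.comp (Subgroup.zpowers y).subtype z ∈ Subgroup.zpowers (y : G) :=
    fun z => (MonoidHom.map_zpowers H.subtype y).le (Subgroup.mem_map_of_mem _ z.2)
  have hres := congrArg (resH2 _ ((H.subtype.comp (Subgroup.zpowers y).subtype).codRestrict _
    hcyclic)) (AddMonoidHom.mem_ker.1 (AddSubgroup.mem_iInf.1 hx y))
  rw [resH2_resH2, map_zero] at hres
  rw [AddMonoidHom.mem_ker, resH2_resH2]
  exact hres

open QuotientGroup

section RightCosets

variable (P : Subgroup G)

noncomputable def rightRep (x : G) : G := (Quotient.mk (rightRel P) x).out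

theorem mul_inv_rightRep_mem (x : G) : x * (rightRep P x)⁻¹ ∈ P :=
  rightRel_apply.1 (Quotient.mk_out (s := rightRel P) x)

theorem rightRep_rightRep_mul (x y : G) : rightRep P (rightRep P x * y) = rightRep P (x * y) :=
  congrArg Quotient.out <| Quotient.sound <| rightRel_apply.2 <| by
    simpa [mul_assoc] using mul_inv_rightRep_mem P x

noncomputable def cosetFactor (x : G) : P := ⟨x * (rightRep P x)⁻¹, mul_inv_rightRep_mem P x⟩

theorem cosetFactor_mul_rightRep (x : G) : (cosetFactor P x : G) * rightRep P x = x :=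
  inv_mul_cancel_right x _

def rightCosetMul (g : G) : Quotient (rightRel P) ≃ Quotient (rightRel P) :=
  Quotient.congr (Equiv.mulRight g) fun a b => by simp [rightRel_apply, mul_assoc]

theorem rightCosetMul_out (g : G) (q : Quotient (rightRel P)) :
    (rightCosetMul P g q).out = rightRep P (q.out * g) := by
  conv_lhs => rw [← Quotient.out_eq q]
  rfl

end RightCosets

section Transfer

variable {M : GMod G} {P : Subgroup G}

/-- Used with `s * x = p * t`, where `p ∈ P` and `t` is the representative of `P * (s * x)`. -/
def transferTerm (f : G → G → M) (c : P → M) (s : G) (p : P) (t x : G) : M :=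
  s⁻¹ • c p - f s⁻¹ p + f x t⁻¹

theorem transferTerm_coboundary {f : G → G → M} (hf : f ∈ twoCocycles M) {c : P → M}
    (hc : dOne (M.res P.subtype) c = fun p q : P => f p q) {g h s s₁ s₂ : G} {p₁ p₂ p₃ : P}
    (h₁ : s * g = p₁ * s₁) (h₂ : s₁ * h = p₂ * s₂) (h₃ : s * (g * h) = p₃ * s₂) :
    g • transferTerm f c s₁ p₂ s₂ h - transferTerm f c s p₃ s₂ (g * h)
      + transferTerm f c s p₁ s₁ g = f g h := by
  obtain rfl : p₃ = p₁ * p₂ := Subtype.ext <| mul_right_cancel (b := s₂) <| by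
    rw [Subgroup.coe_mul, mul_assoc, ← h₂, ← mul_assoc, ← h₁, mul_assoc, h₃]
  have e₁ : g * s₁⁻¹ = s⁻¹ * p₁ := by
    rw [mul_inv_eq_iff_eq_mul, mul_assoc, ← h₁, inv_mul_cancel_left]
  have e₂ : h * s₂⁻¹ = s₁⁻¹ * p₂ := by
    rw [mul_inv_eq_iff_eq_mul, mul_assoc, ← h₂, inv_mul_cancel_left]
  have hc₁₂ : (p₁ : G) • c p₂ = f p₁ p₂ + c (p₁ * p₂) - c p₁ := by
    have hcp : (p₁ : G) • c p₂ - c (p₁ * p₂) + c p₁ = f p₁ p₂ := congrFun (congrFun hc p₁) p₂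
    rw [← hcp]
    abel
  have k₁ : s⁻¹ • f p₁ p₂ = f (g * s₁⁻¹) p₂ + f s⁻¹ p₁ - f s⁻¹ (p₁ * p₂) := by
    rw [e₁]; exact eq_sub_of_add_eq (hf s⁻¹ p₁ p₂)
  have k₂ : g • f s₁⁻¹ p₂ = f (g * s₁⁻¹) p₂ + f g s₁⁻¹ - f g (h * s₂⁻¹) := by
    rw [e₂]; exact eq_sub_of_add_eq (hf g s₁⁻¹ p₂)
  have k₃ : g • f h s₂⁻¹ = f (g * h) s₂⁻¹ + f g h - f g (h * s₂⁻¹) :=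
    eq_sub_of_add_eq (hf g h s₂⁻¹)
  simp only [transferTerm, smul_sub, smul_add]
  rw [← mul_smul, e₁, mul_smul, hc₁₂]
  simp only [smul_sub, smul_add]
  rw [k₁, k₂, k₃, Subgroup.coe_mul]
  abel

noncomputable def transferCochain [Fintype (Quotient (rightRel P))] (f : G → G → M)
    (c : P → M) (x : G) : M :=
  ∑ q : Quotient (rightRel P),
    transferTerm f c q.out (cosetFactor P (q.out * x)) (rightRep P (q.out * x)) x

theorem dOne_transferCochain [Fintype (Quotient (rightRel P))] {f : G → G → M}
    (hf : f ∈ twoCocycles M) {c : P → M} (hc : dOne (M.res P.subtype) c = fun p q : P => f p q) :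
    dOne M (transferCochain f c) = Fintype.card (Quotient (rightRel P)) • f := by
  funext g h
  let U : G → G → M := fun s x =>
    transferTerm f c s (cosetFactor P (s * x)) (rightRep P (s * x)) x
  have hU : ∀ s, g • U (rightRep P (s * g)) h - U s (g * h) + U s g = f g h := fun s => by
    simp only [U, ← mul_assoc s g h, ← rightRep_rightRep_mul P (s * g) h]
    refine transferTerm_coboundary hf hc (cosetFactor_mul_rightRep P _).symm
      (cosetFactor_mul_rightRep P _).symm ?_
    rw [rightRep_rightRep_mul, cosetFactor_mul_rightRep, mul_assoc]
  have hreindex : ∑ q : Quotient (rightRel P), g • U (rightRep P (q.out * g)) h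
      = ∑ q : Quotient (rightRel P), g • U q.out h :=
    Fintype.sum_equiv (rightCosetMul P g) _ _ fun q => by rw [rightCosetMul_out]
  calc g • ∑ q : Quotient (rightRel P), U q.out h - ∑ q : Quotient (rightRel P), U q.out (g * h)
        + ∑ q : Quotient (rightRel P), U q.out g
      = ∑ q : Quotient (rightRel P),
          (g • U (rightRep P (q.out * g)) h - U q.out (g * h) + U q.out g) := by
        rw [Finset.smul_sum, ← hreindex, ← Finset.sum_sub_distrib, ← Finset.sum_add_distrib]
    _ = Fintype.card (Quotient (rightRel P)) • f g h := by
        simp only [hU, Finset.sum_const, Finset.card_univ]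

theorem index_nsmul_eq_zero_of_resH2_eq_zero (M : GMod G) (P : Subgroup G) [P.FiniteIndex]
    {x : H2 M} (hx : resH2 M P.subtype x = 0) : P.index • x = 0 := by
  have : Finite (Quotient (rightRel P)) :=
    Finite.of_equiv _ (quotientRightRelEquivQuotientLeftRel P).symm
  let := Fintype.ofFinite (Quotient (rightRel P))
  have hcard : Fintype.card (Quotient (rightRel P)) = P.index := by
    rw [Subgroup.index, ← Nat.card_eq_fintype_card,
      Nat.card_congr (quotientRightRelEquivQuotientLeftRel P)]
  obtain ⟨f, rfl⟩ := QuotientAddGroup.mk_surjective x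
  obtain ⟨c, hc⟩ := (QuotientAddGroup.eq_zero_iff _).1 hx
  have hmem : P.index • f ∈ (dOne M).range.addSubgroupOf (twoCocycles M) :=
    ⟨transferCochain f.1 c, by rw [dOne_transferCochain f.2 hc, hcard]; rfl⟩
  exact (map_nsmul (QuotientAddGroup.mk' _) _ _).symm.trans
    ((QuotientAddGroup.eq_zero_iff _).2 hmem)

end Transfer

end GMod

theorem sha_vanishes_of_sylow_general (G : Type u) [Group G] [Finite G] (M : GMod G)
    (h : ∀ (p : ℕ), p.Prime → ∀ P : Sylow p G,
      Sha2omega (M.res (P : Subgroup G).subtype) = ⊥) :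
    Sha2omega M = ⊥ := by
  refine (AddSubgroup.eq_bot_iff_forall _).2 fun x hx => ?_
  refine eq_zero_of_forall_sylow_index_nsmul_eq_zero G fun p hp P => ?_
  have hres : resH2 M (P : Subgroup G).subtype x = 0 := by
    simpa [h p hp P] using resH2_subtype_mem_sha2omega hx (P : Subgroup G)
  exact index_nsmul_eq_zero_of_resH2_eq_zero M P hres

/-- If `Ш²_ω(P, M)` vanishes for every Sylow `p`-subgroup `P` of the finite
group `G` (for every prime `p`), then `Ш²_ω(G, M) = 0`. -/
theorem sha_vanishes_of_sylow (G : Type u) [Group G] [Finite G] (M : GMod G)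
    (hfg : Module.Finite ℤ M)
    (h : ∀ (p : ℕ), p.Prime → ∀ P : Sylow p G,
      Sha2omega (M.res (P : Subgroup G).subtype) = ⊥) :
    Sha2omega M = ⊥ :=
  sha_vanishes_of_sylow_general G M h
end
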